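/- Let y(x) := (−1)^{3(3−1)/2} x^{−3²/2} det[ I_{j+k+1}(2√x) ]_{j,k=0,1,2} for x > 0. Then y satisfies, for all x > 0, x³ y⁽⁴⁾ + 28 x² y⁽³⁾ + (230 − 10x) x y″ + (540 − 122x) y′ + (−270 + 9x) y = 0. -/

import Mathlib

open Real

/-- Modified Bessel function of the first kind,
`I_ν(x) := Σ_{k=0}^∞ (x/2)^{ν+2k}/(k! Γ(ν+k+1))`. -/
noncomputable def besselI (ν : ℝ) (x : ℝ) : ℝ :=
  ∑' k : ℕ, (x / 2) ^ (ν + 2 * (k : ℝ)) / ((k.factorial : ℝ) * Real.Gamma (ν + (k : ℝ) + 1))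

/-- `y(x) := (−1)^{l(l−1)/2} x^{−l²/2} det[I_{j+k+1}(2√x)]_{j,k=0,…,l−1}`. -/
noncomputable def hankelY (l : ℕ) (x : ℝ) : ℝ :=
  (-1 : ℝ) ^ (l * (l - 1) / 2) * x ^ (-((l : ℝ) ^ 2) / 2) *
    Matrix.det (fun j k : Fin l =>
      besselI (((j : ℕ) : ℝ) + ((k : ℕ) : ℝ) + 1) (2 * Real.sqrt x))

noncomputable def g (n : ℕ) (x : ℝ) : ℝ :=
  ∑' k : ℕ, x ^ k / ((k.factorial : ℝ) * ((n + k).factorial : ℝ))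

lemma summable_g (n : ℕ) (x : ℝ) :
    Summable (fun k : ℕ => x ^ k / ((k.factorial : ℝ) * ((n + k).factorial : ℝ))) := by
  apply Summable.of_norm_bounded (Real.summable_pow_div_factorial |x|)
  intro k
  have h1 : (0:ℝ) < k.factorial := by positivity
  have h0 : (1:ℝ) ≤ ((n + k).factorial : ℝ) := by
    exact_mod_cast Nat.one_le_iff_ne_zero.mpr (Nat.factorial_ne_zero (n+k))
  have h2 : (k.factorial : ℝ) ≤ (k.factorial : ℝ) * ((n + k).factorial : ℝ) := by
    nlinarith
  rw [norm_div, norm_pow, Real.norm_eq_abs]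
  have h3 : ‖(k.factorial : ℝ) * ((n + k).factorial : ℝ)‖
      = (k.factorial : ℝ) * ((n + k).factorial : ℝ) := by
    rw [Real.norm_eq_abs, abs_of_pos]; positivity
  rw [h3]
  exact div_le_div_of_nonneg_left (by positivity) h1 h2

lemma summable_shift (f : ℕ → ℝ) (hf : Summable fun k => f (k+1)) : Summable f :=
  (summable_nat_add_iff 1).mp hf

lemma tsum_shift (f : ℕ → ℝ) (hf : Summable fun k => f (k+1)) (h0 : f 0 = 0) :
    ∑' k, f k = ∑' k, f (k+1) := by
  rw [Summable.tsum_eq_zero_add (summable_shift f hf), h0, zero_add]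

lemma shift_term (n k : ℕ) (x : ℝ) :
    ((k+1 : ℕ) : ℝ) * x ^ k / (((k+1).factorial : ℝ) * ((n + (k+1)).factorial : ℝ))
      = x ^ k / ((k.factorial : ℝ) * (((n+1) + k).factorial : ℝ)) := by
  have h : n + (k+1) = (n+1) + k := by omega
  rw [h, Nat.factorial_succ]
  have hk : (k.factorial : ℝ) ≠ 0 := by positivity
  have hnk : (((n+1) + k).factorial : ℝ) ≠ 0 := by positivity
  have hk1 : ((k:ℝ)+1) ≠ 0 := by positivity
  push_cast
  field_simp

lemma deriv_term_shift (n k : ℕ) (x : ℝ) :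
    ((k+1 : ℕ) : ℝ) * x ^ ((k+1)-1) / (((k+1).factorial : ℝ) * ((n + (k+1)).factorial : ℝ))
      = x ^ k / ((k.factorial : ℝ) * (((n+1) + k).factorial : ℝ)) := by
  have h : (k + 1) - 1 = k := rfl
  rw [h, shift_term]

lemma hasDerivAt_g (n : ℕ) (x : ℝ) : HasDerivAt (g n) (g (n+1) x) x := by
  set R : ℝ := |x| + 1 with hR
  have hRpos : 0 < R := by positivity
  have hR1 : 1 ≤ R := by
    have := abs_nonneg x; linarith
  have key : HasDerivAt (fun z : ℝ => ∑' k : ℕ,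
      z ^ k / ((k.factorial : ℝ) * ((n + k).factorial : ℝ)))
      (∑' k : ℕ, ((k : ℝ) * x ^ (k-1)) / ((k.factorial : ℝ) * ((n + k).factorial : ℝ))) x := by
    refine hasDerivAt_tsum_of_isPreconnected (u := fun k : ℕ => (2*R) ^ k / (k.factorial : ℝ))
      (t := Metric.ball (0:ℝ) R) (y₀ := (0:ℝ))
      (g' := fun (k : ℕ) (y : ℝ) => ((k : ℝ) * y ^ (k-1)) / ((k.factorial : ℝ) * ((n + k).factorial : ℝ)))
      (Real.summable_pow_div_factorial (2*R)) Metric.isOpen_ball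
      ((convex_ball (0:ℝ) R).isPreconnected)
      (fun k y _ => (hasDerivAt_pow k y).div_const _)
      ?bound ?mem0 (by simpa using summable_g n 0) ?memx
    case bound =>
      intro k y hy
      have hyR : |y| ≤ R := by
        rw [Metric.mem_ball, Real.dist_eq, sub_zero] at hy; exact hy.le
      have hd : (0:ℝ) < (k.factorial : ℝ) * ((n + k).factorial : ℝ) := by positivity
      have hkf : (k.factorial : ℝ) ≤ (k.factorial : ℝ) * ((n + k).factorial : ℝ) := by
        have h0 : (1:ℝ) ≤ ((n + k).factorial : ℝ) := by
          exact_mod_cast Nat.one_le_iff_ne_zero.mpr (Nat.factorial_ne_zero (n+k))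
        nlinarith [show (0:ℝ) < (k.factorial:ℝ) by positivity]
      rw [norm_div, norm_mul, norm_pow, Real.norm_natCast, Real.norm_eq_abs,
        Real.norm_eq_abs, abs_of_pos hd]
      have step1 : (k:ℝ) * |y| ^ (k-1) / ((k.factorial : ℝ) * ((n + k).factorial : ℝ))
          ≤ (k:ℝ) * R ^ (k-1) / (k.factorial : ℝ) := by
        apply div_le_div₀ (by positivity) _ (by positivity) hkf
        apply mul_le_mul_of_nonneg_left _ (by positivity)
        exact pow_le_pow_left₀ (abs_nonneg y) hyR _
      have step2 : (k:ℝ) * R ^ (k-1) / (k.factorial : ℝ) ≤ (2*R) ^ k / (k.factorial : ℝ) := by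
        apply div_le_div_of_nonneg_right _ (by positivity)
        have hk2 : (k:ℝ) ≤ 2 ^ k := by exact_mod_cast (Nat.lt_two_pow_self (n := k)).le
        have hRk : R ^ (k-1) ≤ R ^ k := pow_le_pow_right₀ hR1 (Nat.sub_le k 1)
        calc (k:ℝ) * R ^ (k-1) ≤ 2 ^ k * R ^ k := by
              apply mul_le_mul hk2 hRk (by positivity) (by positivity)
          _ = (2*R) ^ k := (mul_pow 2 R k).symm
      linarith
    case mem0 => simpa using hRpos
    case memx => simp [Metric.mem_ball, Real.dist_eq, hR]
  have heq : (∑' k : ℕ, ((k : ℝ) * x ^ (k-1)) / ((k.factorial : ℝ) * ((n + k).factorial : ℝ)))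
      = g (n+1) x := by
    rw [tsum_shift _ ?hs (by simp)]
    · exact tsum_congr fun k => deriv_term_shift n k x
    case hs =>
      apply Summable.congr (summable_g (n+1) x)
      intro k
      exact (deriv_term_shift n k x).symm
  rw [heq] at key
  exact key

lemma g_rec (n : ℕ) (x : ℝ) : g n x = ((n:ℝ)+1) * g (n+1) x + x * g (n+2) x := by
  have hsplit : ∀ k : ℕ, x ^ k / ((k.factorial : ℝ) * ((n + k).factorial : ℝ))
      = ((n:ℝ)+1) * (x ^ k / ((k.factorial : ℝ) * (((n+1) + k).factorial : ℝ)))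
        + (k:ℝ) * x ^ k / ((k.factorial : ℝ) * (((n+1) + k).factorial : ℝ)) := by
    intro k
    have h : (n+1) + k = (n + k) + 1 := by omega
    rw [h, Nat.factorial_succ]
    have h1 : (k.factorial : ℝ) ≠ 0 := by positivity
    have h2 : ((n + k).factorial : ℝ) ≠ 0 := by positivity
    have h3 : ((n:ℝ) + (k:ℝ) + 1) ≠ 0 := by positivity
    push_cast
    field_simp
    ring
  have hK : Summable (fun k : ℕ => (k:ℝ) * x ^ k / ((k.factorial : ℝ) * (((n+1) + k).factorial : ℝ))) := by
    apply summable_shift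
    apply Summable.congr ((summable_g (n+2) x).mul_left x)
    intro k
    have h2 : ((n+1) + (k+1)) = ((n+2) + k) := by omega
    rw [h2, Nat.factorial_succ]
    have h1 : (k.factorial : ℝ) ≠ 0 := by positivity
    have h4 : (((n+2) + k).factorial : ℝ) ≠ 0 := by positivity
    push_cast
    field_simp
    ring
  have hKsum : (∑' k : ℕ, (k:ℝ) * x ^ k / ((k.factorial : ℝ) * (((n+1) + k).factorial : ℝ)))
      = x * g (n+2) x := by
    rw [tsum_shift _ ?hs2 (by simp)]
    · rw [g, ← tsum_mul_left]
      apply tsum_congr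
      intro k
      have h2 : ((n+1) + (k+1)) = ((n+2) + k) := by omega
      rw [h2, Nat.factorial_succ]
      have h1 : (k.factorial : ℝ) ≠ 0 := by positivity
      have h4 : (((n+2) + k).factorial : ℝ) ≠ 0 := by positivity
      push_cast
      field_simp
      ring
    case hs2 =>
      apply Summable.congr ((summable_g (n+2) x).mul_left x)
      intro k
      have h2 : ((n+1) + (k+1)) = ((n+2) + k) := by omega
      rw [h2, Nat.factorial_succ]
      have h1 : (k.factorial : ℝ) ≠ 0 := by positivity
      have h4 : (((n+2) + k).factorial : ℝ) ≠ 0 := by positivity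
      push_cast
      field_simp
      ring
  calc g n x = ∑' k : ℕ, (((n:ℝ)+1) * (x ^ k / ((k.factorial : ℝ) * (((n+1) + k).factorial : ℝ)))
        + (k:ℝ) * x ^ k / ((k.factorial : ℝ) * (((n+1) + k).factorial : ℝ))) :=
      tsum_congr hsplit
    _ = ((n:ℝ)+1) * g (n+1) x + x * g (n+2) x := by
      rw [Summable.tsum_add ((summable_g (n+1) x).mul_left _) hK, tsum_mul_left, hKsum]
      rfl

noncomputable def T (a b c : ℕ) (x : ℝ) : ℝ := g a x * g b x * g c x

lemma hasDerivAt_T (a b c : ℕ) (x : ℝ) :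
    HasDerivAt (fun y => T a b c y)
      (T (a+1) b c x + T a (b+1) c x + T a b (c+1) x) x := by
  have h := ((hasDerivAt_g a x).mul (hasDerivAt_g b x)).mul (hasDerivAt_g c x)
  have e : (g (a+1) x * g b x + g a x * g (b+1) x) * g c x + g a x * g b x * g (c+1) x
      = T (a+1) b c x + T a (b+1) c x + T a b (c+1) x := by
    simp only [T]; ring
  simp only [Pi.mul_apply] at h; rw [e] at h
  exact h

lemma besselI_nat_eq (m : ℕ) {x : ℝ} (hx : 0 < x) :
    besselI (m : ℝ) (2 * Real.sqrt x) = Real.sqrt x ^ m * g m x := by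
  unfold besselI g
  rw [← tsum_mul_left]
  apply tsum_congr
  intro k
  have hsx : (0:ℝ) < Real.sqrt x := Real.sqrt_pos.mpr hx
  have h1 : (2 * Real.sqrt x / 2) = Real.sqrt x := by ring
  have h2 : ((m:ℝ) + 2*(k:ℝ)) = ((m + 2*k : ℕ) : ℝ) := by push_cast; ring
  rw [h1, h2, Real.rpow_natCast]
  have h3 : Real.sqrt x ^ (m + 2*k) = Real.sqrt x ^ m * x ^ k := by
    rw [pow_add, pow_mul, Real.sq_sqrt hx.le]
  have h4 : Real.Gamma ((m:ℝ) + (k:ℝ) + 1) = ((m+k).factorial : ℝ) := by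
    rw [show ((m:ℝ) + (k:ℝ) + 1) = ((m+k : ℕ) : ℝ) + 1 by push_cast; ring,
      Real.Gamma_nat_eq_factorial]
  rw [h3, h4, mul_div_assoc]
noncomputable def Y0 : ℝ → ℝ := fun x => (-1 : ℝ) * T 1 3 5 x + (1 : ℝ) * T 1 4 4 x + (1 : ℝ) * T 2 2 5 x + (-2 : ℝ) * T 2 3 4 x + (1 : ℝ) * T 3 3 3 x

noncomputable def Y1 : ℝ → ℝ := fun x => (-1 : ℝ) * T 1 3 6 x + (1 : ℝ) * T 1 4 5 x + (1 : ℝ) * T 2 2 6 x + (-1 : ℝ) * T 2 3 5 x + (-1 : ℝ) * T 2 4 4 x + (1 : ℝ) * T 3 3 4 x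

noncomputable def Y2 : ℝ → ℝ := fun x => (-1 : ℝ) * T 1 3 7 x + (1 : ℝ) * T 1 5 5 x + (1 : ℝ) * T 2 2 7 x + (-2 : ℝ) * T 2 4 5 x + (1 : ℝ) * T 3 4 4 x

noncomputable def Y3 : ℝ → ℝ := fun x => (-1 : ℝ) * T 1 3 8 x + (-1 : ℝ) * T 1 4 7 x + (2 : ℝ) * T 1 5 6 x + (1 : ℝ) * T 2 2 8 x + (1 : ℝ) * T 2 3 7 x + (-2 : ℝ) * T 2 4 6 x + (-1 : ℝ) * T 2 5 5 x + (1 : ℝ) * T 4 4 4 x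

noncomputable def Y4 : ℝ → ℝ := fun x => (-1 : ℝ) * T 1 3 9 x + (-2 : ℝ) * T 1 4 8 x + (1 : ℝ) * T 1 5 7 x + (2 : ℝ) * T 1 6 6 x + (1 : ℝ) * T 2 2 9 x + (2 : ℝ) * T 2 3 8 x + (-2 : ℝ) * T 2 4 7 x + (-2 : ℝ) * T 2 5 6 x + (1 : ℝ) * T 3 3 7 x + (-2 : ℝ) * T 3 4 6 x + (-1 : ℝ) * T 3 5 5 x + (3 : ℝ) * T 4 4 5 x

lemma deriv_Y0 : deriv Y0 = Y1 := by
  funext x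
  have h : HasDerivAt Y0 _ x := ((((((hasDerivAt_T 1 3 5 x).const_mul ((-1 : ℝ))).add ((hasDerivAt_T 1 4 4 x).const_mul ((1 : ℝ)))).add ((hasDerivAt_T 2 2 5 x).const_mul ((1 : ℝ)))).add ((hasDerivAt_T 2 3 4 x).const_mul ((-2 : ℝ)))).add ((hasDerivAt_T 3 3 3 x).const_mul ((1 : ℝ))))
  rw [h.deriv]
  simp only [Y1, T]
  norm_num [T]
  ring_nf

lemma deriv_Y1 : deriv Y1 = Y2 := by
  funext x
  have h : HasDerivAt Y1 _ x := (((((((hasDerivAt_T 1 3 6 x).const_mul ((-1 : ℝ))).add ((hasDerivAt_T 1 4 5 x).const_mul ((1 : ℝ)))).add ((hasDerivAt_T 2 2 6 x).const_mul ((1 : ℝ)))).add ((hasDerivAt_T 2 3 5 x).const_mul ((-1 : ℝ)))).add ((hasDerivAt_T 2 4 4 x).const_mul ((-1 : ℝ)))).add ((hasDerivAt_T 3 3 4 x).const_mul ((1 : ℝ))))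
  rw [h.deriv]
  simp only [Y2, T]
  norm_num [T]
  ring_nf

lemma deriv_Y2 : deriv Y2 = Y3 := by
  funext x
  have h : HasDerivAt Y2 _ x := ((((((hasDerivAt_T 1 3 7 x).const_mul ((-1 : ℝ))).add ((hasDerivAt_T 1 5 5 x).const_mul ((1 : ℝ)))).add ((hasDerivAt_T 2 2 7 x).const_mul ((1 : ℝ)))).add ((hasDerivAt_T 2 4 5 x).const_mul ((-2 : ℝ)))).add ((hasDerivAt_T 3 4 4 x).const_mul ((1 : ℝ))))
  rw [h.deriv]
  simp only [Y3, T]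
  norm_num [T]
  ring_nf

lemma deriv_Y3 : deriv Y3 = Y4 := by
  funext x
  have h : HasDerivAt Y3 _ x := (((((((((hasDerivAt_T 1 3 8 x).const_mul ((-1 : ℝ))).add ((hasDerivAt_T 1 4 7 x).const_mul ((-1 : ℝ)))).add ((hasDerivAt_T 1 5 6 x).const_mul ((2 : ℝ)))).add ((hasDerivAt_T 2 2 8 x).const_mul ((1 : ℝ)))).add ((hasDerivAt_T 2 3 7 x).const_mul ((1 : ℝ)))).add ((hasDerivAt_T 2 4 6 x).const_mul ((-2 : ℝ)))).add ((hasDerivAt_T 2 5 5 x).const_mul ((-1 : ℝ)))).add ((hasDerivAt_T 4 4 4 x).const_mul ((1 : ℝ))))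
  rw [h.deriv]
  simp only [Y4, T]
  norm_num [T]
  ring_nf

lemma hankelY_eq {x : ℝ} (hx : 0 < x) : hankelY 3 x = Y0 x := by
  have b1 : besselI (1:ℝ) (2 * Real.sqrt x) = Real.sqrt x ^ 1 * g 1 x := by
    exact_mod_cast besselI_nat_eq 1 hx
  have b2 : besselI (2:ℝ) (2 * Real.sqrt x) = Real.sqrt x ^ 2 * g 2 x := by
    exact_mod_cast besselI_nat_eq 2 hx
  have b3 : besselI (3:ℝ) (2 * Real.sqrt x) = Real.sqrt x ^ 3 * g 3 x := by
    exact_mod_cast besselI_nat_eq 3 hx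
  have b4 : besselI (4:ℝ) (2 * Real.sqrt x) = Real.sqrt x ^ 4 * g 4 x := by
    exact_mod_cast besselI_nat_eq 4 hx
  have b5 : besselI (5:ℝ) (2 * Real.sqrt x) = Real.sqrt x ^ 5 * g 5 x := by
    exact_mod_cast besselI_nat_eq 5 hx
  have hdet : Matrix.det (fun j k : Fin 3 =>
      besselI (((j : ℕ) : ℝ) + ((k : ℕ) : ℝ) + 1) (2 * Real.sqrt x))
      = Real.sqrt x ^ 9 * (-(Y0 x)) := by
    refine (Matrix.det_fin_three _).trans ?_
    norm_num
    rw [b1, b2, b3, b4, b5]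
    simp only [Y0, T]
    ring
  unfold hankelY
  rw [hdet]
  have key : x ^ (-((3:ℕ):ℝ) ^ 2 / 2) * Real.sqrt x ^ 9 = 1 := by
    have h9 : Real.sqrt x ^ 9 = x ^ ((9:ℝ)/2) := by
      rw [Real.sqrt_eq_rpow, ← Real.rpow_natCast (x ^ ((1:ℝ)/2)) 9, ← Real.rpow_mul hx.le]
      norm_num
    rw [h9, ← Real.rpow_add hx]
    norm_num
  have hpow : ((-1:ℝ)) ^ (3*(3-1)/2) = -1 := by norm_num
  have hre : ((-1:ℝ)) ^ (3*(3-1)/2) * x ^ (-((3:ℕ):ℝ) ^ 2 / 2) * (Real.sqrt x ^ 9 * -(Y0 x))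
      = (x ^ (-((3:ℕ):ℝ) ^ 2 / 2) * Real.sqrt x ^ 9) * Y0 x := by
    rw [hpow]; ring
  rw [hre, key, one_mul]

set_option maxHeartbeats 2000000 in
/-- The case `l = 3`: `x³y⁽⁴⁾ + 28x²y⁽³⁾ + (230 − 10x)xy″ + (540 − 122x)y′ + (−270 + 9x)y = 0`
for `y(x) = (−1)^{3·2/2} x^{−9/2} det[I_{j+k+1}(2√x)]_{j,k=0,1,2}`. -/
theorem hankelY_three_fourth_order_ODE :
    ∀ x : ℝ, 0 < x →
      x ^ 3 * iteratedDeriv 4 (hankelY 3) x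
        + 28 * x ^ 2 * iteratedDeriv 3 (hankelY 3) x
        + (230 - 10 * x) * x * iteratedDeriv 2 (hankelY 3) x
        + (540 - 122 * x) * deriv (hankelY 3) x
        + (-270 + 9 * x) * hankelY 3 x = 0 := by
  intro x hx
  have hx0 : x ≠ 0 := ne_of_gt hx
  have hE : hankelY 3 =ᶠ[nhds x] Y0 :=
    Filter.eventuallyEq_of_mem (Ioi_mem_nhds hx) fun y hy => hankelY_eq hy
  have hE1 : deriv (hankelY 3) =ᶠ[nhds x] Y1 := by
    have h := hE.deriv; rwa [deriv_Y0] at h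
  have hE2 : deriv (deriv (hankelY 3)) =ᶠ[nhds x] Y2 := by
    have h := hE1.deriv; rwa [deriv_Y1] at h
  have hE3 : deriv (deriv (deriv (hankelY 3))) =ᶠ[nhds x] Y3 := by
    have h := hE2.deriv; rwa [deriv_Y2] at h
  have hE4 : deriv (deriv (deriv (deriv (hankelY 3)))) =ᶠ[nhds x] Y4 := by
    have h := hE3.deriv; rwa [deriv_Y3] at h
  have it2 : iteratedDeriv 2 (hankelY 3) = deriv (deriv (hankelY 3)) := by
    rw [show (2:ℕ) = 1+1 from rfl, iteratedDeriv_succ, iteratedDeriv_one]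
  have it3 : iteratedDeriv 3 (hankelY 3) = deriv (deriv (deriv (hankelY 3))) := by
    rw [show (3:ℕ) = 2+1 from rfl, iteratedDeriv_succ, it2]
  have it4 : iteratedDeriv 4 (hankelY 3) = deriv (deriv (deriv (deriv (hankelY 3)))) := by
    rw [show (4:ℕ) = 3+1 from rfl, iteratedDeriv_succ, it3]
  have hd0 : hankelY 3 x = Y0 x := hankelY_eq hx
  have hd1 : deriv (hankelY 3) x = Y1 x := hE1.eq_of_nhds
  have hd2 : iteratedDeriv 2 (hankelY 3) x = Y2 x := by rw [it2]; exact hE2.eq_of_nhds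
  have hd3 : iteratedDeriv 3 (hankelY 3) x = Y3 x := by rw [it3]; exact hE3.eq_of_nhds
  have hd4 : iteratedDeriv 4 (hankelY 3) x = Y4 x := by rw [it4]; exact hE4.eq_of_nhds
  rw [hd0, hd1, hd2, hd3, hd4]
  simp only [Y0, Y1, Y2, Y3, Y4, T]
  have e3 : g 3 x = (g 1 x - 2 * g 2 x) / x := by
    rw [eq_div_iff hx0]
    have h := g_rec 1 x
    push_cast at h
    linear_combination -h
  have e4 : g 4 x = (g 2 x - 3 * g 3 x) / x := by
    rw [eq_div_iff hx0]
    have h := g_rec 2 x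
    push_cast at h
    linear_combination -h
  have e5 : g 5 x = (g 3 x - 4 * g 4 x) / x := by
    rw [eq_div_iff hx0]
    have h := g_rec 3 x
    push_cast at h
    linear_combination -h
  have e6 : g 6 x = (g 4 x - 5 * g 5 x) / x := by
    rw [eq_div_iff hx0]
    have h := g_rec 4 x
    push_cast at h
    linear_combination -h
  have e7 : g 7 x = (g 5 x - 6 * g 6 x) / x := by
    rw [eq_div_iff hx0]
    have h := g_rec 5 x
    push_cast at h
    linear_combination -h
  have e8 : g 8 x = (g 6 x - 7 * g 7 x) / x := by
    rw [eq_div_iff hx0]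
    have h := g_rec 6 x
    push_cast at h
    linear_combination -h
  have e9 : g 9 x = (g 7 x - 8 * g 8 x) / x := by
    rw [eq_div_iff hx0]
    have h := g_rec 7 x
    push_cast at h
    linear_combination -h
  rw [e9, e8, e7, e6, e5, e4, e3]
  field_simp
  ring
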